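/- Let δ ∈ (0,1]. Let W be a standard exponential random variable and let S, S' be independent positive strictly stable random variables with exponent δ having the same distribution, with W, S, S' mutually independent. Then W·(S/S') has the Mittag-Leffler distribution with parameter δ: E[exp(-s·W·S/S')] = 1/(1+s^δ) for all s ≥ 0. In particular, the Mittag-Leffler distribution is a mixed exponential distribution. -/

import Mathlib

open MeasureTheory ProbabilityTheory Filter Set
open scoped Topology ENNReal

/-!
If `W` is standard exponential and independent of `S' > 0`, then
`P(W / S' > t) = E[exp (-t S')] = exp (-t ^ δ)`, so `(W / S') ^ δ` is again standard exponential.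
Conditioning on `X = W / S'`, which is independent of `S`, gives
`E[exp (-s X S)] = E[exp (-(s X) ^ δ)] = E[exp (-s ^ δ X ^ δ)] = 1 / (1 + s ^ δ)`.
-/

section

variable {Ω : Type*} [MeasurableSpace Ω] {P : Measure Ω}

def IsStdExponential (P : Measure Ω) (V : Ω → ℝ) : Prop :=
  ∀ x : ℝ, 0 ≤ x → P {ω | x < V ω} = ENNReal.ofReal (Real.exp (-x))

def IsPositiveStable (P : Measure Ω) (δ : ℝ) (S : Ω → ℝ) : Prop :=
  ∀ s : ℝ, 0 ≤ s → ∫ ω, Real.exp (-(s * S ω)) ∂P = Real.exp (-(s ^ δ))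

lemma integrable_exp_neg_of_ae_nonneg [IsFiniteMeasure P] {f : Ω → ℝ}
    (hf : AEStronglyMeasurable f P) (hf0 : ∀ᵐ ω ∂P, 0 ≤ f ω) :
    Integrable (fun ω => Real.exp (-f ω)) P := by
  refine .of_bound (by fun_prop) 1 ?_
  filter_upwards [hf0] with ω hω
  simpa [abs_of_pos (Real.exp_pos _)] using hω

lemma IsPositiveStable.ae_pos [IsFiniteMeasure P] {δ : ℝ} {S : Ω → ℝ}
    (hS : IsPositiveStable P δ S) (hδ : 0 < δ) : ∀ᵐ ω ∂P, 0 < S ω := by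
  have hbound : ∀ t : ℝ, 0 < t → P.real {ω | S ω ≤ 0} ≤ Real.exp (-(t ^ δ)) := by
    intro t ht
    have hint : Integrable (fun ω => Real.exp (-(t * S ω))) P :=
      .of_integral_ne_zero (by rw [hS t ht.le]; positivity)
    calc P.real {ω | S ω ≤ 0} ≤ P.real {ω | 1 ≤ Real.exp (-(t * S ω))} :=
          measureReal_mono fun ω (hω : S ω ≤ 0) =>
            Real.one_le_exp (neg_nonneg.2 (mul_nonpos_of_nonneg_of_nonpos ht.le hω))
      _ ≤ ∫ ω, Real.exp (-(t * S ω)) ∂P := by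
          simpa using mul_meas_ge_le_integral_of_nonneg
            (ae_of_all _ fun ω => (Real.exp_pos _).le) hint 1
      _ = Real.exp (-(t ^ δ)) := hS t ht.le
  have hlim : Tendsto (fun t : ℝ => Real.exp (-(t ^ δ))) atTop (𝓝 0) :=
    Real.tendsto_exp_atBot.comp (tendsto_neg_atTop_atBot.comp (tendsto_rpow_atTop hδ))
  have hzero : P.real {ω | S ω ≤ 0} = 0 :=
    le_antisymm (ge_of_tendsto hlim ((eventually_gt_atTop 0).mono hbound)) measureReal_nonneg
  rw [ae_iff]
  simpa [measureReal_eq_zero_iff] using hzero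

lemma ProbabilityTheory.IndepFun.integral_comp_eq_integral_integral [IsFiniteMeasure P]
    {α β : Type*} [MeasurableSpace α] [MeasurableSpace β] {X : Ω → α} {Y : Ω → β}
    (hXY : IndepFun X Y P) (hX : Measurable X) (hY : Measurable Y) {f : α × β → ℝ}
    (hf : Measurable f) (hfi : Integrable (fun ω => f (X ω, Y ω)) P) :
    ∫ ω, f (X ω, Y ω) ∂P = ∫ ω, ∫ ω', f (X ω, Y ω') ∂P ∂P := by
  have hmap : P.map (fun ω => (X ω, Y ω)) = (P.prod P).map (Prod.map X Y) := by
    rw [(indepFun_iff_map_prod_eq_prod_map_map hX.aemeasurable hY.aemeasurable).1 hXY,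
      Measure.map_prod_map P P hX hY]
  have hfi' : Integrable (f ∘ Prod.map X Y) (P.prod P) := by
    rw [← integrable_map_measure hf.aestronglyMeasurable (hX.prodMap hY).aemeasurable, ← hmap,
      integrable_map_measure hf.aestronglyMeasurable (hX.prodMk hY).aemeasurable]
    exact hfi
  calc ∫ ω, f (X ω, Y ω) ∂P = ∫ p, f p ∂(P.map fun ω => (X ω, Y ω)) :=
        (integral_map (hX.prodMk hY).aemeasurable hf.aestronglyMeasurable).symm
    _ = ∫ p, f (Prod.map X Y p) ∂(P.prod P) := by
        rw [hmap, integral_map (hX.prodMap hY).aemeasurable hf.aestronglyMeasurable]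
    _ = ∫ ω, ∫ ω', f (X ω, Y ω') ∂P ∂P := integral_prod _ hfi'

namespace IsStdExponential

variable [IsProbabilityMeasure P] {V : Ω → ℝ}

lemma ae_pos (hV : IsStdExponential P V) (hVm : Measurable V) : ∀ᵐ ω ∂P, 0 < V ω := by
  have h := hV 0 le_rfl
  rw [neg_zero, Real.exp_zero, ENNReal.ofReal_one] at h
  exact (mem_ae_iff_prob_eq_one (measurableSet_lt measurable_const hVm)).2 h

lemma measureReal_le (hV : IsStdExponential P V) (hVm : Measurable V) {x : ℝ} (hx : 0 ≤ x) :
    P.real {ω | V ω ≤ x} = 1 - Real.exp (-x) := by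
  have hcompl : {ω | V ω ≤ x} = {ω | x < V ω}ᶜ := by ext; simp
  rw [hcompl, probReal_compl_eq_one_sub (measurableSet_lt measurable_const hVm), measureReal_def,
    hV x hx, ENNReal.toReal_ofReal (Real.exp_pos _).le]

lemma integral_exp_neg_mul (hV : IsStdExponential P V) (hVm : Measurable V) {c : ℝ}
    (hc : 0 ≤ c) : ∫ ω, Real.exp (-(c * V ω)) ∂P = (1 + c)⁻¹ := by
  rcases hc.eq_or_lt with rfl | hc
  · simp
  have hnn : ∀ᵐ ω ∂P, 0 ≤ c * V ω := by
    filter_upwards [hV.ae_pos hVm] with ω hω using by positivity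
  have hle : (fun ω => Real.exp (-(c * V ω))) ≤ᵐ[P] fun _ => 1 := by
    filter_upwards [hnn] with ω hω using Real.exp_le_one_iff.2 (by linarith)
  have hlevel : ∀ t ∈ Ioc (0 : ℝ) 1,
      P.real {ω | t ≤ Real.exp (-(c * V ω))} = 1 - t ^ c⁻¹ := by
    rintro t ⟨ht0, ht1⟩
    have hset : {ω | t ≤ Real.exp (-(c * V ω))} = {ω | V ω ≤ -Real.log t / c} := by
      ext ω
      rw [mem_ofPred_eq, mem_ofPred_eq, ← Real.log_le_iff_le_exp ht0, le_div_iff₀ hc]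
      constructor <;> intro h <;> linarith
    have hx : 0 ≤ -Real.log t / c := div_nonneg (neg_nonneg.2 (Real.log_nonpos ht0.le ht1)) hc.le
    rw [hset, hV.measureReal_le hVm hx, Real.rpow_def_of_pos ht0, neg_div, neg_neg, div_eq_mul_inv]
  have hexp : -1 < c⁻¹ := by linarith [inv_pos.2 hc]
  rw [(integrable_exp_neg_of_ae_nonneg (by fun_prop) hnn).integral_eq_integral_Ioc_meas_le
      (ae_of_all _ fun ω => (Real.exp_pos _).le) hle,
    setIntegral_congr_fun measurableSet_Ioc hlevel, ← intervalIntegral.integral_of_le zero_le_one,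
    intervalIntegral.integral_sub intervalIntegrable_const
      (intervalIntegral.intervalIntegrable_rpow' hexp),
    integral_rpow (Or.inl hexp), Real.one_rpow, Real.zero_rpow (by positivity)]
  simp only [intervalIntegral.integral_const, sub_zero, smul_eq_mul, mul_one]
  field_simp
  ring

lemma measure_lt_div (hV : IsStdExponential P V) (hVm : Measurable V) {T : Ω → ℝ}
    (hTm : Measurable T) (hind : IndepFun T V P) (hT : ∀ᵐ ω ∂P, 0 < T ω) {t : ℝ} (ht : 0 ≤ t) :
    P {ω | t < V ω / T ω} = ENNReal.ofReal (∫ ω, Real.exp (-(t * T ω)) ∂P) := by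
  set A : Set (ℝ × ℝ) := {p | t * p.1 < p.2}
  have hA : MeasurableSet A := measurableSet_lt (by fun_prop) measurable_snd
  have hset : {ω | t < V ω / T ω} =ᵐ[P] (fun ω => (T ω, V ω)) ⁻¹' A := by
    filter_upwards [hT] with ω hω
    exact propext (lt_div_iff₀ hω)
  have hT0 : ∀ᵐ y ∂(P.map T), 0 ≤ y :=
    (ae_map_iff hTm.aemeasurable measurableSet_Ici).2 (hT.mono fun ω h => h.le)
  calc P {ω | t < V ω / T ω} = P ((fun ω => (T ω, V ω)) ⁻¹' A) := measure_congr hset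
    _ = ((P.map T).prod (P.map V)) A := by
        rw [← (indepFun_iff_map_prod_eq_prod_map_map hTm.aemeasurable hVm.aemeasurable).1 hind,
          Measure.map_apply (hTm.prodMk hVm) hA]
    _ = ∫⁻ y, P.map V (Prod.mk y ⁻¹' A) ∂(P.map T) := Measure.prod_apply hA
    _ = ∫⁻ y, ENNReal.ofReal (Real.exp (-(t * y))) ∂(P.map T) := by
        refine lintegral_congr_ae ?_
        filter_upwards [hT0] with y hy
        rw [Measure.map_apply hVm (measurable_prodMk_left hA)]
        exact hV _ (mul_nonneg ht hy)
    _ = ∫⁻ ω, ENNReal.ofReal (Real.exp (-(t * T ω))) ∂P := lintegral_map (by fun_prop) hTm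
    _ = ENNReal.ofReal (∫ ω, Real.exp (-(t * T ω)) ∂P) := by
        have hint : Integrable (fun ω => Real.exp (-(t * T ω))) P := by
          refine integrable_exp_neg_of_ae_nonneg (by fun_prop) ?_
          filter_upwards [hT] with ω hω using by positivity
        exact (ofReal_integral_eq_lintegral_ofReal hint
          (ae_of_all _ fun _ => (Real.exp_pos _).le)).symm

end IsStdExponential

lemma IsPositiveStable.isStdExponential_div_rpow [IsProbabilityMeasure P] {δ : ℝ} {T W : Ω → ℝ}
    (hT : IsPositiveStable P δ T) (hδ : 0 < δ) (hW : IsStdExponential P W) (hWm : Measurable W)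
    (hTm : Measurable T) (hind : IndepFun T W P) :
    IsStdExponential P (fun ω => (W ω / T ω) ^ δ) := by
  intro x hx
  have hT0 := hT.ae_pos hδ
  have hset : {ω | x < (W ω / T ω) ^ δ} =ᵐ[P] {ω | x ^ δ⁻¹ < W ω / T ω} := by
    filter_upwards [hT0, hW.ae_pos hWm] with ω hTω hWω
    exact propext (Real.rpow_inv_lt_iff_of_pos hx (div_pos hWω hTω).le hδ).symm
  rw [measure_congr hset, hW.measure_lt_div hWm hTm hind hT0 (by positivity), hT _ (by positivity),
    ← Real.rpow_mul hx, inv_mul_cancel₀ hδ.ne', Real.rpow_one]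

end

theorem mittagLeffler_is_mixed_exponential_general
    {Ω : Type*} [MeasurableSpace Ω] (P : Measure Ω) [IsProbabilityMeasure P]
    (δ : ℝ) (hδ0 : 0 < δ)
    (W S S' : Ω → ℝ) (hWm : Measurable W) (hSm : Measurable S) (hS'm : Measurable S')
    (hW : ∀ x : ℝ, 0 ≤ x → P {ω | x < W ω} = ENNReal.ofReal (Real.exp (-x)))
    (hS : ∀ s : ℝ, 0 ≤ s →
      ∫ ω, Real.exp (-(s * S ω)) ∂P = Real.exp (-(s ^ δ)))
    (hS' : ∀ s : ℝ, 0 ≤ s →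
      ∫ ω, Real.exp (-(s * S' ω)) ∂P = Real.exp (-(s ^ δ)))
    (hindep : iIndepFun ![W, S, S'] P) :
    ∀ s : ℝ, 0 ≤ s →
      ∫ ω, Real.exp (-(s * (W ω * S ω / S' ω))) ∂P = (1 + s ^ δ)⁻¹ := by
  intro s hs
  have hmeas : ∀ i, Measurable (![W, S, S'] i) := fun i => by fin_cases i <;> assumption
  set X : Ω → ℝ := fun ω => W ω / S' ω
  have hXS : IndepFun X S P :=
    (hindep.indepFun_prodMk hmeas 0 2 1 (by decide) (by decide)).comp
      (measurable_fst.div measurable_snd) measurable_id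
  have hXexp : IsStdExponential P (fun ω => X ω ^ δ) :=
    IsPositiveStable.isStdExponential_div_rpow hS' hδ0 hW hWm hS'm
      (hindep.indepFun (show (2 : Fin 3) ≠ 0 by decide))
  have hX0 : ∀ᵐ ω ∂P, 0 ≤ X ω := by
    filter_upwards [IsStdExponential.ae_pos hW hWm, IsPositiveStable.ae_pos hS' hδ0]
      with ω hWω hS'ω using (div_pos hWω hS'ω).le
  have hint : Integrable (fun ω => Real.exp (-(s * X ω * S ω))) P := by
    refine integrable_exp_neg_of_ae_nonneg (by fun_prop) ?_
    filter_upwards [hX0, IsPositiveStable.ae_pos hS hδ0] with ω hXω hSω using by positivity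
  calc ∫ ω, Real.exp (-(s * (W ω * S ω / S' ω))) ∂P = ∫ ω, Real.exp (-(s * X ω * S ω)) ∂P := by
        simp_rw [X, mul_div_right_comm, mul_assoc]
    _ = ∫ ω, ∫ ω', Real.exp (-(s * X ω * S ω')) ∂P ∂P :=
        hXS.integral_comp_eq_integral_integral (hWm.div hS'm) hSm
          (f := fun p => Real.exp (-(s * p.1 * p.2))) (by fun_prop) hint
    _ = ∫ ω, Real.exp (-(s ^ δ * X ω ^ δ)) ∂P := by
        refine integral_congr_ae ?_
        filter_upwards [hX0] with ω hω
        rw [hS _ (by positivity), Real.mul_rpow hs hω]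
    _ = (1 + s ^ δ)⁻¹ := hXexp.integral_exp_neg_mul (by fun_prop) (by positivity)

/-- Let `δ ∈ (0,1]`. If `W` is a standard exponential random variable and
`S, S'` are positive strictly stable random variables with exponent `δ` having one and the
same distribution, with `W, S, S'` mutually independent, then `W·(S/S')` has the
Mittag-Leffler distribution with parameter `δ`:
`E[exp (-s·W·S/S')] = 1/(1+s^δ)` for all `s ≥ 0`. -/
theorem mittagLeffler_is_mixed_exponential
    {Ω : Type*} [MeasurableSpace Ω] (P : Measure Ω) [IsProbabilityMeasure P]
    (δ : ℝ) (hδ0 : 0 < δ) (hδ1 : δ ≤ 1)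
    (W S S' : Ω → ℝ) (hWm : Measurable W) (hSm : Measurable S) (hS'm : Measurable S')
    (hW : ∀ x : ℝ, 0 ≤ x → P {ω | x < W ω} = ENNReal.ofReal (Real.exp (-x)))
    (hSnn : ∀ᵐ ω ∂P, 0 ≤ S ω) (hS'nn : ∀ᵐ ω ∂P, 0 ≤ S' ω)
    (hS : ∀ s : ℝ, 0 ≤ s →
      ∫ ω, Real.exp (-(s * S ω)) ∂P = Real.exp (-(s ^ δ)))
    (hS' : ∀ s : ℝ, 0 ≤ s →
      ∫ ω, Real.exp (-(s * S' ω)) ∂P = Real.exp (-(s ^ δ)))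
    (hindep : iIndepFun ![W, S, S'] P) :
    ∀ s : ℝ, 0 ≤ s →
      ∫ ω, Real.exp (-(s * (W ω * S ω / S' ω))) ∂P = (1 + s ^ δ)⁻¹ :=
  mittagLeffler_is_mixed_exponential_general P δ hδ0 W S S' hWm hSm hS'm hW hS hS' hindep
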